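/- Let G be a simple 3-regular graph with girth at least 5, let xy be an edge of G with κ_{1/4}(x,y) = 0 (equivalently W_1(μ_x^{1/4}, μ_y^{1/4}) = 1), let x_1, x_2 be the two neighbors of x other than y, and let y_1, y_2 be the two neighbors of y other than x. Then, after possibly exchanging the labels of y_1 and y_2, the graph distances satisfy d(x_1, y_1) = 2 and d(x_2, y_2) = 2; consequently there exist vertices u and v, both outside {x, y, x_1, x_2, y_1, y_2}, with x_1 ~ u ~ y_1 and x_2 ~ v ~ y_2. -/

import Mathlib

/-!
With idleness `1/4` the measures `μ_x`, `μ_y` are uniform on `{x, y, x₁, x₂}` and `{y, x, y₁, y₂}`.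
Girth at least `5` forces every distance `d(xᵢ, yⱼ)` to be `2` or `3`. If the distance-`2` pairs
contain no perfect matching, some `xᵢ` (or, symmetrically, some `yⱼ`) is at distance `3` from both
vertices on the other side; then the `1`-Lipschitz potential `w ↦ min (d(w, y₁), d(w, y₂))` shows,
by weak Kantorovich duality, that `W₁(μ_x, μ_y) ≥ 5/4 > 1`. The middle vertices of the two
paths of length `2` avoid the six named vertices because `G` has no triangles.
-/

open scoped ENNReal

namespace RicciFlatCubic

variable {V : Type*}

/-- The probability measure `μ_x^p` on the vertex set: mass `p` at `x`,
mass `(1-p)/deg x` at each neighbor of `x`, and `0` elsewhere. -/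
noncomputable def muMeasure (G : SimpleGraph V) [G.LocallyFinite] (p : ℝ≥0∞) (x : V) :
    V → ℝ≥0∞ := fun z =>
  haveI : DecidableEq V := Classical.decEq V
  haveI : Decidable (G.Adj x z) := Classical.dec _
  if z = x then p
  else if G.Adj x z then (1 - p) / (G.degree x : ℝ≥0∞)
  else 0

/-- `π : V × V → [0,1]` is a transport plan from `μ₁` to `μ₂` if its marginals are `μ₁`, `μ₂`. -/
def IsTransportPlan (μ₁ μ₂ : V → ℝ≥0∞) (π : V → V → ℝ≥0∞) : Prop :=
  (∀ u v, π u v ≤ 1) ∧ (∀ u, ∑' v, π u v = μ₁ u) ∧ (∀ v, ∑' u, π u v = μ₂ v)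

/-- The Wasserstein distance `W₁(μ₁, μ₂)`: the infimum over all transport plans of the
transport cost `∑ d(u,v) π(u,v)`, where `d` is the shortest-path distance in `G`. -/
noncomputable def W1 (G : SimpleGraph V) (μ₁ μ₂ : V → ℝ≥0∞) : ℝ≥0∞ :=
  ⨅ π : {π : V → V → ℝ≥0∞ // IsTransportPlan μ₁ μ₂ π},
    ∑' q : V × V, (G.dist q.1 q.2 : ℝ≥0∞) * π.1 q.1 q.2

/-- The `p`-Ollivier-Ricci curvature `κ_p(x,y) = 1 - W₁(μ_x^p, μ_y^p)` (as a real number),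
for a real idleness parameter `p`. -/
noncomputable def kappa (G : SimpleGraph V) [G.LocallyFinite] (p : ℝ) (x y : V) : ℝ :=
  1 - (W1 G (muMeasure G (ENNReal.ofReal p) x) (muMeasure G (ENNReal.ofReal p) y)).toReal

/-- The edge `xy` lies on two 5-cycles whose vertex sets intersect exactly in `{x, y}`. -/
def TwoPentagons (G : SimpleGraph V) (x y : V) : Prop :=
  ∃ P₁ P₂ : G.Walk x x, P₁.IsCycle ∧ P₂.IsCycle ∧ P₁.length = 5 ∧ P₂.length = 5 ∧
    s(x, y) ∈ P₁.edges ∧ s(x, y) ∈ P₂.edges ∧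
    {v | v ∈ P₁.support} ∩ {v | v ∈ P₂.support} = {x, y}

/-- The Petersen graph as the Kneser graph `K(5,2)`. -/
def petersen : SimpleGraph {s : Finset (Fin 5) // s.card = 2} where
  Adj a b := Disjoint a.1 b.1
  symm := ⟨fun _ _ h => Disjoint.symm h⟩
  loopless := ⟨by
    rintro ⟨s, hs⟩ h
    beta_reduce at h
    rw [disjoint_self] at h
    simp only [Finset.bot_eq_empty] at h
    simp [h] at hs⟩

/-- The Triplex: a 12-cycle on `ℤ/12ℤ` together with six chords. -/
def triplex : SimpleGraph (ZMod 12) :=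
  SimpleGraph.fromRel fun i j =>
    j = i + 1 ∨ (i = 1 ∧ j = 7) ∨ (i = 2 ∧ j = 10) ∨ (i = 3 ∧ j = 8) ∨
      (i = 4 ∧ j = 12) ∨ (i = 5 ∧ j = 9) ∨ (i = 6 ∧ j = 11)

/-- The dodecahedral graph: layer `0` is the outer 5-cycle `a`, layers `1`, `2` form the
middle 10-cycle `b₁ c₁ b₂ c₂ … b₅ c₅`, layer `3` is the inner 5-cycle `d`. -/
def dodecahedral : SimpleGraph (Fin 4 × ZMod 5) :=
  SimpleGraph.fromRel fun p q =>
    (p.1 = 0 ∧ q.1 = 0 ∧ q.2 = p.2 + 1) ∨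
    (p.1 = 0 ∧ q.1 = 1 ∧ q.2 = p.2) ∨
    (p.1 = 1 ∧ q.1 = 2 ∧ q.2 = p.2) ∨
    (p.1 = 2 ∧ q.1 = 1 ∧ q.2 = p.2 + 1) ∨
    (p.1 = 2 ∧ q.1 = 3 ∧ q.2 = p.2) ∨
    (p.1 = 3 ∧ q.1 = 3 ∧ q.2 = p.2 + 1)

/-- The half-dodecahedral graph: inner 5-cycle `y` (`Sum.inl`), outer 10-cycle `x`
(`Sum.inr`), and spokes `yᵢ ~ x_{2i-1}`. -/
def halfDodecahedral : SimpleGraph (ZMod 5 ⊕ ZMod 10) :=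
  SimpleGraph.fromRel fun p q =>
    (∃ i : ZMod 5, p = Sum.inl i ∧ q = Sum.inl (i + 1)) ∨
    (∃ j : ZMod 10, p = Sum.inr j ∧ q = Sum.inr (j + 1)) ∨
    (∃ i : ZMod 5, p = Sum.inl i ∧ q = Sum.inr (2 * (i.val : ZMod 10) - 1))

/-- The two-sided infinite path on `ℤ`. -/
def infinitePath : SimpleGraph ℤ := SimpleGraph.fromRel fun i j => j = i + 1

/-- The cycle `Cₙ` on `ℤ/nℤ`. -/
def cycleZMod (n : ℕ) : SimpleGraph (ZMod n) := SimpleGraph.fromRel fun i j => j = i + 1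

noncomputable instance (v : {s : Finset (Fin 5) // s.card = 2}) :
    Fintype (petersen.neighborSet v) := (Set.toFinite _).fintype

noncomputable instance (v : ZMod 12) : Fintype (triplex.neighborSet v) :=
  (Set.toFinite _).fintype

noncomputable instance (v : Fin 4 × ZMod 5) : Fintype (dodecahedral.neighborSet v) :=
  (Set.toFinite _).fintype

open SimpleGraph

section Girth

variable {G : SimpleGraph V} {a b c d : V}

lemma not_adj_of_four_le_egirth (hg : 4 ≤ G.egirth) (hab : G.Adj a b) (hbc : G.Adj b c) :
    ¬ G.Adj c a := by
  intro hca
  have hcycle : (Walk.cons hab (Walk.cons hbc (Walk.cons hca Walk.nil))).IsCycle := by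
    simp [Walk.isCycle_def, Walk.isTrail_def, hab.ne, hbc.ne, hca.ne, hab.ne', hca.ne', Sym2.eq]
  have hlen := hg.trans (egirth_le_length hcycle)
  simp only [Walk.length_cons, Walk.length_nil] at hlen
  exact absurd hlen (by decide)

lemma not_adj_of_five_le_egirth (hg : 5 ≤ G.egirth) (hab : G.Adj a b) (hbc : G.Adj b c)
    (hcd : G.Adj c d) (hac : a ≠ c) (hbd : b ≠ d) : ¬ G.Adj d a := by
  intro hda
  have hcycle :
      (Walk.cons hab (Walk.cons hbc (Walk.cons hcd (Walk.cons hda Walk.nil)))).IsCycle := by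
    simp [Walk.isCycle_def, Walk.isTrail_def, hab.ne, hbc.ne, hcd.ne, hda.ne, hab.ne', hda.ne',
      hac, hbd, hac.symm, Sym2.eq]
  have hlen := hg.trans (egirth_le_length hcycle)
  simp only [Walk.length_cons, Walk.length_nil] at hlen
  exact absurd hlen (by decide)

end Girth

section Measure

variable {G : SimpleGraph V} [G.LocallyFinite] {p : ℝ≥0∞} {x z : V}

lemma muMeasure_self : muMeasure G p x x = p := by simp [muMeasure]

lemma muMeasure_of_adj (h : G.Adj x z) : muMeasure G p x z = (1 - p) / G.degree x := by
  simp [muMeasure, h.ne', h]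

lemma muMeasure_of_not_adj (hzx : z ≠ x) (h : ¬ G.Adj x z) : muMeasure G p x z = 0 := by
  simp [muMeasure, hzx, h]

lemma reachable_of_muMeasure_ne_zero (h : muMeasure G p x z ≠ 0) : G.Reachable x z := by
  by_cases hzx : z = x
  · subst hzx
    exact Reachable.refl _
  by_cases hxz : G.Adj x z
  · exact hxz.reachable
  · exact absurd (muMeasure_of_not_adj hzx hxz) h

lemma neighborFinset_eq_of_isRegularOfDegree_three [DecidableEq V]
    (hreg : G.IsRegularOfDegree 3) {y x₁ x₂ : V} (hxy : G.Adj x y) (hx₁ : G.Adj x x₁)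
    (hx₂ : G.Adj x x₂) (hx12 : x₁ ≠ x₂) (hx1y : x₁ ≠ y) (hx2y : x₂ ≠ y) :
    G.neighborFinset x = {y, x₁, x₂} := by
  have hsub : ({y, x₁, x₂} : Finset V) ⊆ G.neighborFinset x := by
    simp [Finset.insert_subset_iff, hxy, hx₁, hx₂]
  refine (Finset.eq_of_subset_of_card_le hsub ?_).symm
  rw [card_neighborFinset_eq_degree, hreg x,
    Finset.card_insert_of_notMem (by simp [hx1y.symm, hx2y.symm]), Finset.card_pair hx12]

lemma one_sub_quarter_div_three : ((1 : ℝ≥0∞) - 1/4) / 3 = 1/4 := by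
  have h : (1 : ℝ≥0∞) - 1/4 = 3/4 := by
    refine ENNReal.sub_eq_of_eq_add_rev (by norm_num) ?_
    rw [ENNReal.div_add_div_same, show (1 + 3 : ℝ≥0∞) = 4 by norm_num, ENNReal.div_self] <;>
      norm_num
  rw [h, ENNReal.div_right_comm, ENNReal.div_self] <;> norm_num

lemma tsum_mul_muMeasure_quarter (hreg : G.IsRegularOfDegree 3) {y x₁ x₂ : V} (hxy : G.Adj x y)
    (hx₁ : G.Adj x x₁) (hx₂ : G.Adj x x₂) (hx12 : x₁ ≠ x₂) (hx1y : x₁ ≠ y) (hx2y : x₂ ≠ y)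
    (g : V → ℕ) :
    ∑' u, (g u : ℝ≥0∞) * muMeasure G (1/4) x u = ((g x + g y + g x₁ + g x₂ : ℕ) : ℝ≥0∞) / 4 := by
  classical
  have hN := neighborFinset_eq_of_isRegularOfDegree_three hreg hxy hx₁ hx₂ hx12 hx1y hx2y
  have hquarter : ∀ {z}, G.Adj x z → muMeasure G (1/4) x z = 1/4 := fun h => by
    rw [muMeasure_of_adj h, hreg x, Nat.cast_ofNat, one_sub_quarter_div_three]
  rw [tsum_eq_sum (s := {x, y, x₁, x₂}) fun u hu => ?_]
  · rw [Finset.sum_insert (by simp [hxy.ne, hx₁.ne, hx₂.ne]),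
      Finset.sum_insert (by simp [hx1y.symm, hx2y.symm]), Finset.sum_pair hx12,
      muMeasure_self, hquarter hxy, hquarter hx₁, hquarter hx₂]
    push_cast
    simp only [one_div, ENNReal.div_eq_inv_mul]
    ring
  · have hux : u ≠ x := by grind
    have hnadj : ¬ G.Adj x u := by
      rw [← mem_neighborFinset, hN]
      grind
    rw [muMeasure_of_not_adj hux hnadj, mul_zero]

end Measure

section Transport

variable {μ₁ μ₂ : V → ℝ≥0∞} {π : V → V → ℝ≥0∞}

lemma IsTransportPlan.swap (h : IsTransportPlan μ₁ μ₂ π) :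
    IsTransportPlan μ₂ μ₁ (fun u v => π v u) :=
  ⟨fun u v => h.1 v u, h.2.2, h.2.1⟩

lemma IsTransportPlan.apply_le_left (h : IsTransportPlan μ₁ μ₂ π) (u v : V) : π u v ≤ μ₁ u :=
  h.2.1 u ▸ ENNReal.le_tsum v

lemma IsTransportPlan.apply_le_right (h : IsTransportPlan μ₁ μ₂ π) (u v : V) : π u v ≤ μ₂ v :=
  h.2.2 v ▸ ENNReal.le_tsum u

variable (G : SimpleGraph V)

lemma tsum_dist_mul_swap (π : V → V → ℝ≥0∞) :
    ∑' q : V × V, (G.dist q.1 q.2 : ℝ≥0∞) * π q.2 q.1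
      = ∑' q : V × V, (G.dist q.1 q.2 : ℝ≥0∞) * π q.1 q.2 := by
  rw [← (Equiv.prodComm V V).tsum_eq]
  simp [dist_comm]

lemma W1_le_W1_swap : W1 G μ₁ μ₂ ≤ W1 G μ₂ μ₁ :=
  le_iInf fun ⟨π, hπ⟩ => iInf_le_of_le ⟨_, hπ.swap⟩ (tsum_dist_mul_swap G π).le

lemma W1_comm : W1 G μ₁ μ₂ = W1 G μ₂ μ₁ :=
  le_antisymm (W1_le_W1_swap G) (W1_le_W1_swap G)

/-- Weak Kantorovich duality. -/
lemma tsum_mul_le_W1_add (f : V → ℕ)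
    (hf : ∀ u v, μ₁ u ≠ 0 → μ₂ v ≠ 0 → f u ≤ G.dist u v + f v) :
    ∑' u, (f u : ℝ≥0∞) * μ₁ u ≤ W1 G μ₁ μ₂ + ∑' v, (f v : ℝ≥0∞) * μ₂ v := by
  rw [W1, ENNReal.iInf_add]
  refine le_iInf fun ⟨π, hπ⟩ => ?_
  calc ∑' u, (f u : ℝ≥0∞) * μ₁ u
      = ∑' u, ∑' v, (f u : ℝ≥0∞) * π u v := by
        simp_rw [ENNReal.tsum_mul_left, hπ.2.1]
    _ ≤ ∑' u, ∑' v, ((G.dist u v : ℝ≥0∞) * π u v + (f v : ℝ≥0∞) * π u v) := by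
        refine ENNReal.tsum_le_tsum fun u => ENNReal.tsum_le_tsum fun v => ?_
        by_cases h : π u v = 0
        · simp [h]
        have hu : μ₁ u ≠ 0 := fun h0 => h (le_zero_iff.mp (h0 ▸ hπ.apply_le_left u v))
        have hv : μ₂ v ≠ 0 := fun h0 => h (le_zero_iff.mp (h0 ▸ hπ.apply_le_right u v))
        rw [← add_mul]
        exact mul_le_mul_left (by exact_mod_cast hf u v hu hv) _
    _ = (∑' q : V × V, (G.dist q.1 q.2 : ℝ≥0∞) * π q.1 q.2) + ∑' v, (f v : ℝ≥0∞) * μ₂ v := by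
        simp_rw [ENNReal.tsum_add]
        rw [ENNReal.tsum_prod (f := fun u v => (G.dist u v : ℝ≥0∞) * π u v),
          ENNReal.tsum_comm (f := fun u v => (f v : ℝ≥0∞) * π u v)]
        simp_rw [ENNReal.tsum_mul_left, hπ.2.2]

end Transport

section Distance

variable {G : SimpleGraph V} {x y a b : V}

lemma min_dist_le_dist_add_min_dist {u v : V} (h : G.Reachable u v) :
    min (G.dist u a) (G.dist u b) ≤ G.dist u v + min (G.dist v a) (G.dist v b) := by
  have := h.dist_triangle_left a
  have := h.dist_triangle_left b
  omega

lemma dist_le_three (hxy : G.Adj x y) (hxa : G.Adj x a) (hyb : G.Adj y b) : G.dist a b ≤ 3 :=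
  dist_le (Walk.cons hxa.symm (Walk.cons hxy (Walk.cons hyb Walk.nil)))

lemma two_le_dist (hg : 5 ≤ G.egirth) (hxy : G.Adj x y) (hxa : G.Adj x a) (hyb : G.Adj y b)
    (hay : a ≠ y) (hbx : b ≠ x) : 2 ≤ G.dist a b := by
  have hab : a ≠ b := by
    rintro rfl
    exact not_adj_of_four_le_egirth (le_trans (by norm_num) hg) hxy hyb hxa.symm
  have hnadj : ¬ G.Adj a b := fun hab' =>
    not_adj_of_five_le_egirth hg hxa hab' hyb.symm hbx.symm hay hxy.symm
  have hpos := (hxa.symm.reachable.trans (hxy.reachable.trans hyb.reachable)).pos_dist_of_ne hab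
  have hne_one : G.dist a b ≠ 1 := fun h => hnadj (dist_eq_one_iff_adj.mp h)
  omega

lemma exists_adj_adj_of_dist_eq_two (h : G.dist a b = 2) : ∃ u, G.Adj a u ∧ G.Adj u b := by
  obtain ⟨p, hp⟩ := exists_walk_of_dist_ne_zero (h ▸ two_ne_zero)
  rw [h] at hp
  match p, hp with
  | .cons hau (.cons hub .nil), _ => exact ⟨_, hau, hub⟩

lemma exists_adj_adj_not_mem (hg : 4 ≤ G.egirth) {x₁ x₂ y₁ y₂ : V}
    (hxy : G.Adj x y) (hx₁ : G.Adj x x₁) (hx₂ : G.Adj x x₂) (hy₁ : G.Adj y y₁)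
    (hy₂ : G.Adj y y₂) (hxa : G.Adj x a) (hyb : G.Adj y b) (h : G.dist a b = 2) :
    ∃ u ∉ ({x, y, x₁, x₂, y₁, y₂} : Set V), G.Adj a u ∧ G.Adj u b := by
  obtain ⟨u, hau, hub⟩ := exists_adj_adj_of_dist_eq_two h
  have hux : u ≠ x := by
    rintro rfl
    exact not_adj_of_four_le_egirth hg hxy hyb hub.symm
  have huy : u ≠ y := by
    rintro rfl
    exact not_adj_of_four_le_egirth hg hau hxy.symm hxa
  have hxu : ¬ G.Adj x u := fun hxu => not_adj_of_four_le_egirth hg hxa hau hxu.symm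
  have hyu : ¬ G.Adj y u := fun hyu => not_adj_of_four_le_egirth hg hyb hub.symm hyu.symm
  refine ⟨u, ?_, hau, hub⟩
  simp only [Set.mem_insert_iff, Set.mem_singleton_iff, not_or]
  exact ⟨hux, huy, fun h => hxu (h ▸ hx₁), fun h => hxu (h ▸ hx₂), fun h => hyu (h ▸ hy₁),
    fun h => hyu (h ▸ hy₂)⟩

end Distance

section Curvature

variable {G : SimpleGraph V} [G.LocallyFinite] {x y x₁ x₂ y₁ y₂ : V}

/-- Witnessed through weak duality by the potential `w ↦ min (d w y₁) (d w y₂)`, whose `μ_x`-mean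
exceeds its `μ_y`-mean by at least `5/4`. -/
lemma five_div_four_le_W1 (hreg : G.IsRegularOfDegree 3) (hxy : G.Adj x y)
    (hx₁ : G.Adj x x₁) (hx₂ : G.Adj x x₂) (hx12 : x₁ ≠ x₂) (hx1y : x₁ ≠ y) (hx2y : x₂ ≠ y)
    (hy₁ : G.Adj y y₁) (hy₂ : G.Adj y y₂) (hy12 : y₁ ≠ y₂) (hy1x : y₁ ≠ x) (hy2x : y₂ ≠ x)
    (h₁₁ : G.dist x₁ y₁ = 3) (h₁₂ : G.dist x₁ y₂ = 3)
    (h₂₁ : 2 ≤ G.dist x₂ y₁) (h₂₂ : 2 ≤ G.dist x₂ y₂) :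
    5/4 ≤ W1 G (muMeasure G (1/4) x) (muMeasure G (1/4) y) := by
  set f : V → ℕ := fun w => min (G.dist w y₁) (G.dist w y₂) with hf
  have hLip : ∀ u v, muMeasure G (1/4) x u ≠ 0 → muMeasure G (1/4) y v ≠ 0 →
      f u ≤ G.dist u v + f v := fun u v hu hv =>
    min_dist_le_dist_add_min_dist ((reachable_of_muMeasure_ne_zero hu).symm.trans
      (hxy.reachable.trans (reachable_of_muMeasure_ne_zero hv)))
  have hdual := tsum_mul_le_W1_add G f hLip
  rw [tsum_mul_muMeasure_quarter hreg hxy hx₁ hx₂ hx12 hx1y hx2y,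
    tsum_mul_muMeasure_quarter hreg hxy.symm hy₁ hy₂ hy12 hy1x hy2x] at hdual
  have hfx₁ : f x₁ = 3 := by simp [hf, h₁₁, h₁₂]
  have hfx₂ : 2 ≤ f x₂ := le_min h₂₁ h₂₂
  have hfy₁ : f y₁ = 0 := by simp [hf]
  have hfy₂ : f y₂ = 0 := by simp [hf]
  set s : ℝ≥0∞ := ((f x + f y : ℕ) : ℝ≥0∞) / 4
  have hs : s ≠ ⊤ := ENNReal.div_ne_top (ENNReal.natCast_ne_top _) (by norm_num)
  refine (ENNReal.add_le_add_iff_right hs).mp ?_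
  calc 5/4 + s = ((f x + f y + 5 : ℕ) : ℝ≥0∞) / 4 := by
        rw [← ENNReal.add_div]
        push_cast
        ring_nf
    _ ≤ ((f x + f y + f x₁ + f x₂ : ℕ) : ℝ≥0∞) / 4 :=
        ENNReal.div_le_div_right (by exact_mod_cast (by omega)) _
    _ ≤ W1 G (muMeasure G (1/4) x) (muMeasure G (1/4) y) + s := by
        rwa [hfy₁, hfy₂, add_zero, add_zero, add_comm (f y)] at hdual

lemma dist_eq_two_matching_of_W1_lt (hreg : G.IsRegularOfDegree 3) (hg : 5 ≤ G.egirth)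
    (hxy : G.Adj x y) (hW : W1 G (muMeasure G (1/4) x) (muMeasure G (1/4) y) < 5/4)
    (hx₁ : G.Adj x x₁) (hx₂ : G.Adj x x₂) (hx12 : x₁ ≠ x₂) (hx1y : x₁ ≠ y) (hx2y : x₂ ≠ y)
    (hy₁ : G.Adj y y₁) (hy₂ : G.Adj y y₂) (hy12 : y₁ ≠ y₂) (hy1x : y₁ ≠ x) (hy2x : y₂ ≠ x) :
    (G.dist x₁ y₁ = 2 ∧ G.dist x₂ y₂ = 2) ∨ (G.dist x₁ y₂ = 2 ∧ G.dist x₂ y₁ = 2) := by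
  have l₁₁ := two_le_dist hg hxy hx₁ hy₁ hx1y hy1x
  have l₁₂ := two_le_dist hg hxy hx₁ hy₂ hx1y hy2x
  have l₂₁ := two_le_dist hg hxy hx₂ hy₁ hx2y hy1x
  have l₂₂ := two_le_dist hg hxy hx₂ hy₂ hx2y hy2x
  have u₁₁ := dist_le_three hxy hx₁ hy₁
  have u₁₂ := dist_le_three hxy hx₁ hy₂
  have u₂₁ := dist_le_three hxy hx₂ hy₁
  have u₂₂ := dist_le_three hxy hx₂ hy₂
  have hW' := W1_comm G (μ₁ := muMeasure G (1/4) x) ▸ hW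
  have hx₁_near : ¬ (G.dist x₁ y₁ = 3 ∧ G.dist x₁ y₂ = 3) := fun ⟨h, h'⟩ =>
    (five_div_four_le_W1 hreg hxy hx₁ hx₂ hx12 hx1y hx2y hy₁ hy₂ hy12 hy1x hy2x
      h h' l₂₁ l₂₂).not_gt hW
  have hx₂_near : ¬ (G.dist x₂ y₁ = 3 ∧ G.dist x₂ y₂ = 3) := fun ⟨h, h'⟩ =>
    (five_div_four_le_W1 hreg hxy hx₂ hx₁ hx12.symm hx2y hx1y hy₁ hy₂ hy12 hy1x hy2x
      h h' l₁₁ l₁₂).not_gt hW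
  have hy₁_near : ¬ (G.dist x₁ y₁ = 3 ∧ G.dist x₂ y₁ = 3) := fun ⟨h, h'⟩ =>
    (five_div_four_le_W1 hreg hxy.symm hy₁ hy₂ hy12 hy1x hy2x hx₁ hx₂ hx12 hx1y hx2y
      (dist_comm ▸ h) (dist_comm ▸ h') (dist_comm ▸ l₁₂) (dist_comm ▸ l₂₂)).not_gt hW'
  have hy₂_near : ¬ (G.dist x₁ y₂ = 3 ∧ G.dist x₂ y₂ = 3) := fun ⟨h, h'⟩ =>
    (five_div_four_le_W1 hreg hxy.symm hy₂ hy₁ hy12.symm hy2x hy1x hx₁ hx₂ hx12 hx1y hx2y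
      (dist_comm ▸ h) (dist_comm ▸ h') (dist_comm ▸ l₁₁) (dist_comm ▸ l₂₁)).not_gt hW'
  omega

end Curvature

theorem dist_neighbors_eq_two {V : Type*} (G : SimpleGraph V) [G.LocallyFinite]
    (hreg : G.IsRegularOfDegree 3) (hgirth : 5 ≤ G.egirth)
    (x y x₁ x₂ y₁ y₂ : V) (hxy : G.Adj x y)
    (hflat : W1 G (muMeasure G (1/4) x) (muMeasure G (1/4) y) = 1)
    (hx₁ : G.Adj x x₁) (hx₂ : G.Adj x x₂) (hx12 : x₁ ≠ x₂) (hx1y : x₁ ≠ y) (hx2y : x₂ ≠ y)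
    (hy₁ : G.Adj y y₁) (hy₂ : G.Adj y y₂) (hy12 : y₁ ≠ y₂) (hy1x : y₁ ≠ x) (hy2x : y₂ ≠ x) :
    (G.dist x₁ y₁ = 2 ∧ G.dist x₂ y₂ = 2 ∧
      ∃ u v : V, u ∉ ({x, y, x₁, x₂, y₁, y₂} : Set V) ∧ v ∉ ({x, y, x₁, x₂, y₁, y₂} : Set V) ∧
        G.Adj x₁ u ∧ G.Adj u y₁ ∧ G.Adj x₂ v ∧ G.Adj v y₂) ∨
    (G.dist x₁ y₂ = 2 ∧ G.dist x₂ y₁ = 2 ∧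
      ∃ u v : V, u ∉ ({x, y, x₁, x₂, y₁, y₂} : Set V) ∧ v ∉ ({x, y, x₁, x₂, y₁, y₂} : Set V) ∧
        G.Adj x₁ u ∧ G.Adj u y₂ ∧ G.Adj x₂ v ∧ G.Adj v y₁) := by
  have hW : W1 G (muMeasure G (1/4) x) (muMeasure G (1/4) y) < 5/4 := by
    rw [hflat, ENNReal.lt_div_iff_mul_lt (by norm_num) (by norm_num)]
    norm_num
  have hg₄ : 4 ≤ G.egirth := le_trans (by norm_num) hgirth
  rcases dist_eq_two_matching_of_W1_lt hreg hgirth hxy hW hx₁ hx₂ hx12 hx1y hx2y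
    hy₁ hy₂ hy12 hy1x hy2x with ⟨h₁₁, h₂₂⟩ | ⟨h₁₂, h₂₁⟩
  · obtain ⟨u, hu, hx₁u, huy₁⟩ := exists_adj_adj_not_mem hg₄ hxy hx₁ hx₂ hy₁ hy₂ hx₁ hy₁ h₁₁
    obtain ⟨v, hv, hx₂v, hvy₂⟩ := exists_adj_adj_not_mem hg₄ hxy hx₁ hx₂ hy₁ hy₂ hx₂ hy₂ h₂₂
    exact Or.inl ⟨h₁₁, h₂₂, u, v, hu, hv, hx₁u, huy₁, hx₂v, hvy₂⟩
  · obtain ⟨u, hu, hx₁u, huy₂⟩ := exists_adj_adj_not_mem hg₄ hxy hx₁ hx₂ hy₁ hy₂ hx₁ hy₂ h₁₂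
    obtain ⟨v, hv, hx₂v, hvy₁⟩ := exists_adj_adj_not_mem hg₄ hxy hx₁ hx₂ hy₁ hy₂ hx₂ hy₁ h₂₁
    exact Or.inr ⟨h₁₂, h₂₁, u, v, hu, hv, hx₁u, huy₂, hx₂v, hvy₁⟩

end RicciFlatCubic
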